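/- Fix β ∈ C^N and k ∈ Z^N with k+β ≠ 0. The map sending v_1∧...∧v_p ⊗ t^k to Σ_{i=1}^p (-1)^i (\overline{k+β} | v_i) v_1∧...∧v̂_i∧...∧v_p ⊗ t^k extends to a well-defined linear map T_p^β on Λ^p C^N ⊗ C[t_1^{±1},...,t_N^{±1}] which commutes with the action of every operator h_r of the Hamiltonian Lie algebra H_N, where h_r acts on v⊗t^k by (r̄|k+β) v⊗t^{k+r} + (r r̄^T)v ⊗ t^{k+r}. -/

import Mathlib

/-!
`T_p^β` is, on the `t^k` component, minus the interior product with the covector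
`(\overline{k+β} | ·)`, so it is defined on the whole exterior algebra. A derivation with
`D (ι u) = (r̄ | u) ι r` equals `ι r * (r̄ | ·)⌋`, so its graded commutator with the contraction by
a covector `φ` is `φ r` times the contraction by `(r̄ | ·)`. Moving from `t^k` to `t^(k+r)` adds
exactly `(r̄ | ·)` to the covector, and skew-symmetry of `J` (`(r̄ | r) = 0` and
`(\overline{k+β} | r) = -(r̄ | k+β)`) makes all extra terms cancel.
-/

open Matrix

/-- The standard symplectic matrix `J` for `N = 2n`. -/
noncomputable def Jmat (n : ℕ) : Matrix (Fin n ⊕ Fin n) (Fin n ⊕ Fin n) ℂ :=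
  Matrix.fromBlocks 0 1 (-1) 0

/-- The wedge `v_1 ∧ ... ∧ v_p` inside the exterior algebra. -/
noncomputable def wedge (n : ℕ) {p : ℕ} (v : Fin p → (Fin n ⊕ Fin n → ℂ)) :
    ExteriorAlgebra ℂ (Fin n ⊕ Fin n → ℂ) :=
  ((List.ofFn v).map (ExteriorAlgebra.ι ℂ)).prod

/-- `Σ_{i=1}^p (-1)^i (overline{k+β} | v_i) v_1 ∧ ... ∧ v̂_i ∧ ... ∧ v_p` (0-based indices). -/
noncomputable def contrKβ (n : ℕ) {p : ℕ} (β : Fin n ⊕ Fin n → ℂ) (k : Fin n ⊕ Fin n → ℤ)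
    (v : Fin p → (Fin n ⊕ Fin n → ℂ)) : ExteriorAlgebra ℂ (Fin n ⊕ Fin n → ℂ) :=
  ∑ i : Fin p,
    ((-1 : ℂ) ^ (i.val + 1) *
        ((Jmat n).mulVec ((fun j => (k j : ℂ)) + β) ⬝ᵥ v i)) •
      (((List.ofFn v).map (ExteriorAlgebra.ι ℂ)).eraseIdx i.val).prod

namespace ExteriorAlgebra

open CliffordAlgebra (contractLeft involute)

variable {R M : Type*} [CommRing R] [AddCommGroup M] [Module R M]

theorem mul_ι_eq_ι_mul_involute (u : M) (a : ExteriorAlgebra R M) :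
    a * ι R u = ι R u * involute a := by
  induction a using CliffordAlgebra.induction with
  | algebraMap c => rw [AlgHom.commutes, Algebra.commutes]
  | ι v =>
    rw [CliffordAlgebra.involute_ι, mul_neg, eq_comm, neg_eq_iff_add_eq_zero, ι_add_mul_swap]
  | mul a b ha hb => rw [mul_assoc, hb, ← mul_assoc, ha, mul_assoc, ← map_mul]
  | add a b ha hb => rw [add_mul, ha, hb, map_add, mul_add]

theorem contractLeft_mul (d : Module.Dual R M) (a b : ExteriorAlgebra R M) :
    contractLeft d (a * b) = contractLeft d a * b + involute a * contractLeft d b := by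
  induction a using CliffordAlgebra.induction generalizing b with
  | algebraMap c =>
    rw [CliffordAlgebra.contractLeft_algebraMap_mul, CliffordAlgebra.contractLeft_algebraMap,
      zero_mul, zero_add, AlgHom.commutes]
  | ι v =>
    rw [CliffordAlgebra.contractLeft_ι_mul, CliffordAlgebra.contractLeft_ι,
      CliffordAlgebra.involute_ι, Algebra.smul_def, neg_mul, sub_eq_add_neg]
  | mul a a' ha ha' =>
    rw [mul_assoc, ha, ha', ha a', map_mul]
    noncomm_ring
  | add a a' ha ha' =>
    simp only [add_mul, ha, ha', map_add]
    abel

theorem contractLeft_prod_map_ι (d : Module.Dual R M) (l : List M) :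
    contractLeft d (l.map (ι R)).prod =
      ∑ i : Fin l.length, ((-1 : R) ^ (i : ℕ) * d (l.get i)) •
        ((l.map (ι R)).eraseIdx i).prod := by
  induction l with
  | nil => simp [CliffordAlgebra.contractLeft_one]
  | cons u t ih =>
    rw [List.map_cons, List.prod_cons, CliffordAlgebra.contractLeft_ι_mul, ih]
    simp only [List.length_cons]
    rw [Fin.sum_univ_succ, sub_eq_add_neg, Finset.mul_sum, ← Finset.sum_neg_distrib]
    congr 1
    · simp
    · refine Finset.sum_congr rfl fun j _ => ?_
      rw [mul_smul_comm, ← neg_smul, Fin.val_succ, List.eraseIdx_cons_succ, List.prod_cons]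
      simp [pow_succ]

theorem contractLeft_prod_ofFn_ι {p : ℕ} (d : Module.Dual R M) (v : Fin p → M) :
    contractLeft d ((List.ofFn v).map (ι R)).prod =
      ∑ i : Fin p, ((-1 : R) ^ (i : ℕ) * d (v i)) •
        (((List.ofFn v).map (ι R)).eraseIdx i).prod := by
  rw [contractLeft_prod_map_ι]
  exact Fintype.sum_equiv (finCongr List.length_ofFn) _ _ fun i => by simp [Fin.cast]

theorem eq_ι_mul_contractLeft_of_leibniz {D : ExteriorAlgebra R M →ₗ[R] ExteriorAlgebra R M}
    {x : M} {ρ : Module.Dual R M} (hD : ∀ a b, D (a * b) = D a * b + a * D b)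
    (hDι : ∀ u, D (ι R u) = ρ u • ι R x) (a : ExteriorAlgebra R M) :
    D a = ι R x * contractLeft ρ a := by
  have hD_one : D 1 = 0 := by simpa using hD 1 1
  induction a using CliffordAlgebra.induction with
  | algebraMap c =>
    rw [CliffordAlgebra.contractLeft_algebraMap, mul_zero, Algebra.algebraMap_eq_smul_one,
      map_smul, hD_one, smul_zero]
  | ι u => rw [hDι, CliffordAlgebra.contractLeft_ι, Algebra.smul_def, Algebra.commutes]
  | mul a b ha hb =>
    rw [hD, ha, hb, contractLeft_mul, ← mul_assoc a, mul_ι_eq_ι_mul_involute]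
    noncomm_ring
  | add a b ha hb => rw [map_add, ha, hb, map_add, mul_add]

theorem contractLeft_derivation_apply {D : ExteriorAlgebra R M →ₗ[R] ExteriorAlgebra R M}
    {x : M} {ρ : Module.Dual R M} (hD : ∀ a b, D (a * b) = D a * b + a * D b)
    (hDι : ∀ u, D (ι R u) = ρ u • ι R x) (φ : Module.Dual R M) (a : ExteriorAlgebra R M) :
    contractLeft φ (D a) = D (contractLeft φ a) + φ x • contractLeft ρ a := by
  rw [eq_ι_mul_contractLeft_of_leibniz hD hDι, eq_ι_mul_contractLeft_of_leibniz hD hDι,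
    CliffordAlgebra.contractLeft_ι_mul, CliffordAlgebra.contractLeft_comm ρ φ, mul_neg]
  abel

theorem contractLeft_derivation_apply_eq_zero {D : ExteriorAlgebra R M →ₗ[R] ExteriorAlgebra R M}
    {x : M} {ρ : Module.Dual R M} (hD : ∀ a b, D (a * b) = D a * b + a * D b)
    (hDι : ∀ u, D (ι R u) = ρ u • ι R x) (hρ : ρ x = 0) (a : ExteriorAlgebra R M) :
    contractLeft ρ (D a) = 0 := by
  rw [eq_ι_mul_contractLeft_of_leibniz hD hDι, CliffordAlgebra.contractLeft_ι_mul,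
    CliffordAlgebra.contractLeft_contractLeft, mul_zero, hρ, zero_smul, sub_zero]

end ExteriorAlgebra

namespace Matrix

variable {ι R : Type*} [Fintype ι] [CommRing R] {A : Matrix ι ι R}

theorem mulVec_dotProduct_swap_of_transpose_eq_neg (hA : Aᵀ = -A) (a b : ι → R) :
    A *ᵥ a ⬝ᵥ b = -(A *ᵥ b ⬝ᵥ a) := by
  rw [dotProduct_comm, dotProduct_mulVec, ← mulVec_transpose, hA, neg_mulVec, neg_dotProduct]

theorem mulVec_dotProduct_self_of_transpose_eq_neg [IsAddTorsionFree R] (hA : Aᵀ = -A)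
    (a : ι → R) : A *ᵥ a ⬝ᵥ a = 0 :=
  self_eq_neg.mp (mulVec_dotProduct_swap_of_transpose_eq_neg hA a a)

end Matrix

theorem Jmat_transpose (n : ℕ) : (Jmat n)ᵀ = -Jmat n := by
  simp [Jmat, fromBlocks_transpose, fromBlocks_neg]

open CliffordAlgebra (contractLeft)

section ContractionOp

variable {ι R : Type*} [Fintype ι] [DecidableEq ι] [CommRing R] (J : Matrix ι ι R) (β : ι → R)

/-- The functional `v ↦ (\overline{k+β} | v)` of the paper, where `\bar a = J a`. -/
noncomputable def barPairing (k : ι → ℤ) : Module.Dual R (ι → R) :=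
  dotProductEquiv R ι (J *ᵥ ((fun j => (k j : R)) + β))

theorem barPairing_add (k r : ι → ℤ) :
    barPairing J β (k + r) = barPairing J β k + dotProductEquiv R ι (J *ᵥ fun j => (r j : R)) := by
  have hcast :
      (fun j => ((k + r) j : R)) + β = ((fun j => (k j : R)) + β) + fun j => (r j : R) := by
    ext j
    push_cast [Pi.add_apply]
    ring
  rw [barPairing, barPairing, hcast, mulVec_add, map_add]

/-- The operator `T_p^β`, on all degrees `p` at once. The sign turns the 0-based alternating sign of
`contractLeft` into the paper's `(-1)^i` with `i` 1-based. -/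
noncomputable def contractionOp :
    ((ι → ℤ) →₀ ExteriorAlgebra R (ι → R)) →ₗ[R] ((ι → ℤ) →₀ ExteriorAlgebra R (ι → R)) :=
  Finsupp.lsum R fun k => (Finsupp.lsingle k).comp (-contractLeft (barPairing J β k))

theorem contractionOp_single (k : ι → ℤ) (x : ExteriorAlgebra R (ι → R)) :
    contractionOp J β (Finsupp.single k x) =
      Finsupp.single k (-contractLeft (barPairing J β k) x) := by
  simp [contractionOp]

theorem contractionOp_commute_hamiltonian [IsAddTorsionFree R] (hJ : Jᵀ = -J) (r : ι → ℤ)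
    (D : ExteriorAlgebra R (ι → R) →ₗ[R] ExteriorAlgebra R (ι → R))
    (hD : ∀ a b, D (a * b) = D a * b + a * D b)
    (hDι : ∀ u, D (ExteriorAlgebra.ι R u) =
      ExteriorAlgebra.ι R (vecMulVec (fun i => (r i : R)) (J *ᵥ fun i => (r i : R)) *ᵥ u))
    (Hr : ((ι → ℤ) →₀ ExteriorAlgebra R (ι → R)) →ₗ[R] ((ι → ℤ) →₀ ExteriorAlgebra R (ι → R)))
    (hHr : ∀ k w, Hr (Finsupp.single k w) =
      (J *ᵥ (fun i => (r i : R)) ⬝ᵥ ((fun i => (k i : R)) + β)) • Finsupp.single (k + r) w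
        + Finsupp.single (k + r) (D w))
    (k : ι → ℤ) (w : ExteriorAlgebra R (ι → R)) :
    contractionOp J β (Hr (Finsupp.single k w)) = Hr (contractionOp J β (Finsupp.single k w)) := by
  rw [hHr, map_add, map_smul, contractionOp_single, contractionOp_single, contractionOp_single,
    hHr, Finsupp.smul_single, Finsupp.smul_single, ← Finsupp.single_add, ← Finsupp.single_add,
    barPairing_add]
  congr 1
  set r' : ι → R := fun i => (r i : R)
  set ρ := dotProductEquiv R ι (J *ᵥ r')
  have hDι' : ∀ u, D (ExteriorAlgebra.ι R u) = ρ u • ExteriorAlgebra.ι R r' := fun u => by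
    rw [hDι, vecMulVec_mulVec, op_smul_eq_smul, map_smul]
    rfl
  have hρ : ρ r' = 0 := mulVec_dotProduct_self_of_transpose_eq_neg hJ r'
  have hφ : barPairing J β k r' = -(J *ᵥ r' ⬝ᵥ ((fun i => (k i : R)) + β)) :=
    mulVec_dotProduct_swap_of_transpose_eq_neg hJ _ _
  have hφD := ExteriorAlgebra.contractLeft_derivation_apply hD hDι' (barPairing J β k) w
  have hρD := ExteriorAlgebra.contractLeft_derivation_apply_eq_zero hD hDι' hρ w
  simp only [map_add, LinearMap.add_apply, map_neg, hφD, hρD, hφ]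
  module

end ContractionOp

theorem contractionOp_single_wedge (n : ℕ) {p : ℕ} (β : Fin n ⊕ Fin n → ℂ)
    (k : Fin n ⊕ Fin n → ℤ) (v : Fin p → (Fin n ⊕ Fin n → ℂ)) :
    contractionOp (Jmat n) β (Finsupp.single k (wedge n v)) =
      Finsupp.single k (contrKβ n β k v) := by
  rw [contractionOp_single, wedge, ExteriorAlgebra.contractLeft_prod_ofFn_ι,
    contrKβ, ← Finset.sum_neg_distrib]
  congr 1
  refine Finset.sum_congr rfl fun i _ => ?_
  rw [← neg_smul, pow_succ, barPairing, dotProductEquiv_apply_apply]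
  congr 1
  ring

theorem Tp_well_defined_and_commutes_general (n p : ℕ) (β : Fin n ⊕ Fin n → ℂ) :
    ∃ T : ((Fin n ⊕ Fin n → ℤ) →₀ ExteriorAlgebra ℂ (Fin n ⊕ Fin n → ℂ)) →ₗ[ℂ]
        ((Fin n ⊕ Fin n → ℤ) →₀ ExteriorAlgebra ℂ (Fin n ⊕ Fin n → ℂ)),
      (∀ (k : Fin n ⊕ Fin n → ℤ) (v : Fin p → (Fin n ⊕ Fin n → ℂ)),
        T (Finsupp.single k (wedge n v)) = Finsupp.single k (contrKβ n β k v)) ∧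
      (∀ r : Fin n ⊕ Fin n → ℤ,
        ∀ D : ExteriorAlgebra ℂ (Fin n ⊕ Fin n → ℂ) →ₗ[ℂ] ExteriorAlgebra ℂ (Fin n ⊕ Fin n → ℂ),
          (∀ a b, D (a * b) = D a * b + a * D b) →
          (∀ u : Fin n ⊕ Fin n → ℂ, D (ExteriorAlgebra.ι ℂ u) =
            ExteriorAlgebra.ι ℂ
              ((Matrix.vecMulVec (fun i => (r i : ℂ))
                ((Jmat n).mulVec fun i => (r i : ℂ))).mulVec u)) →
          ∀ Hr : ((Fin n ⊕ Fin n → ℤ) →₀ ExteriorAlgebra ℂ (Fin n ⊕ Fin n → ℂ)) →ₗ[ℂ]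
              ((Fin n ⊕ Fin n → ℤ) →₀ ExteriorAlgebra ℂ (Fin n ⊕ Fin n → ℂ)),
            (∀ (k : Fin n ⊕ Fin n → ℤ) (w : ExteriorAlgebra ℂ (Fin n ⊕ Fin n → ℂ)),
              Hr (Finsupp.single k w) =
                ((Jmat n).mulVec (fun i => (r i : ℂ)) ⬝ᵥ ((fun i => (k i : ℂ)) + β)) •
                  Finsupp.single (k + r) w
                + Finsupp.single (k + r) (D w)) →
            ∀ (k : Fin n ⊕ Fin n → ℤ), ∀ w ∈ ⋀[ℂ]^p (Fin n ⊕ Fin n → ℂ),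
              T (Hr (Finsupp.single k w)) = Hr (T (Finsupp.single k w))) :=
  ⟨contractionOp (Jmat n) β, contractionOp_single_wedge n β,
    fun r D hD hDι Hr hHr k w _ =>
      contractionOp_commute_hamiltonian (Jmat n) β (Jmat_transpose n) r D hD hDι Hr hHr k w⟩

/-- The prescription `v_1∧...∧v_p ⊗ t^k ↦ Σ_i (-1)^i (overline{k+β}|v_i)
v_1∧...∧v̂_i∧...∧v_p ⊗ t^k` extends to a well-defined linear map `T_p^β` on
`Λ^p ℂ^N ⊗ ℂ[t^{±1}]` (realized inside `ExteriorAlgebra ⊗ A_N`, i.e. finitely supported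
`ExteriorAlgebra`-valued functions on `ℤ^N`) which commutes with the action of every operator
`h_r` of the Hamiltonian Lie algebra, acting by
`h_r (v ⊗ t^k) = (r̄|k+β) v ⊗ t^{k+r} + (r r̄^T) v ⊗ t^{k+r}` with `r r̄^T` acting by
derivations on exterior powers. -/
theorem Tp_well_defined_and_commutes (n p : ℕ) (hp : 1 ≤ p) (β : Fin n ⊕ Fin n → ℂ) :
    ∃ T : ((Fin n ⊕ Fin n → ℤ) →₀ ExteriorAlgebra ℂ (Fin n ⊕ Fin n → ℂ)) →ₗ[ℂ]
        ((Fin n ⊕ Fin n → ℤ) →₀ ExteriorAlgebra ℂ (Fin n ⊕ Fin n → ℂ)),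
      (∀ (k : Fin n ⊕ Fin n → ℤ) (v : Fin p → (Fin n ⊕ Fin n → ℂ)),
        T (Finsupp.single k (wedge n v)) = Finsupp.single k (contrKβ n β k v)) ∧
      (∀ r : Fin n ⊕ Fin n → ℤ,
        ∀ D : ExteriorAlgebra ℂ (Fin n ⊕ Fin n → ℂ) →ₗ[ℂ] ExteriorAlgebra ℂ (Fin n ⊕ Fin n → ℂ),
          (∀ a b, D (a * b) = D a * b + a * D b) →
          (∀ u : Fin n ⊕ Fin n → ℂ, D (ExteriorAlgebra.ι ℂ u) =
            ExteriorAlgebra.ι ℂ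
              ((Matrix.vecMulVec (fun i => (r i : ℂ))
                ((Jmat n).mulVec fun i => (r i : ℂ))).mulVec u)) →
          ∀ Hr : ((Fin n ⊕ Fin n → ℤ) →₀ ExteriorAlgebra ℂ (Fin n ⊕ Fin n → ℂ)) →ₗ[ℂ]
              ((Fin n ⊕ Fin n → ℤ) →₀ ExteriorAlgebra ℂ (Fin n ⊕ Fin n → ℂ)),
            (∀ (k : Fin n ⊕ Fin n → ℤ) (w : ExteriorAlgebra ℂ (Fin n ⊕ Fin n → ℂ)),
              Hr (Finsupp.single k w) =
                ((Jmat n).mulVec (fun i => (r i : ℂ)) ⬝ᵥ ((fun i => (k i : ℂ)) + β)) •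
                  Finsupp.single (k + r) w
                + Finsupp.single (k + r) (D w)) →
            ∀ (k : Fin n ⊕ Fin n → ℤ), ∀ w ∈ ⋀[ℂ]^p (Fin n ⊕ Fin n → ℂ),
              T (Hr (Finsupp.single k w)) = Hr (T (Finsupp.single k w))) :=
  Tp_well_defined_and_commutes_general n p β
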